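/- There exists a universal constant C > 0 such that the following holds. Let β ≥ 1 and let d be any metric on the unit square [0,1]² satisfying ‖x − y‖ ≤ d(x, y) ≤ β‖x − y‖ for all x, y ∈ [0,1]², where ‖·‖ denotes the Euclidean norm. Let m ≥ 1 be an integer, let p₁, …, p_m be independent random points, each uniformly distributed on [0,1]², and let S = {p₁, …, p_m}. Let □ ⊆ [0,1]² be any axis-parallel square of side length 1/√m. Then the expected number of indices i ∈ {1, …, m} such that the Voronoi cell of p_i with respect to S in the metric d intersects □ is at most C·β⁵. -/

import Mathlib

/-!
Fix a site `p i` whose cell meets the square `□` of side `s = 1/√m` with corner `c`, and let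
`k = ⌊ν/s⌋`, where `ν` is the Euclidean distance from `c` to the nearest other site. Since `d` is
within a factor `β` of the Euclidean distance, comparing `d` at a point of the cell in `□` shows
`‖p i - c‖ ≤ β(k+5)s`, while every other site avoids the open disc of radius `ks` about `c`.
A square of side `ks/4` inside both the unit square and that disc shows that each other site does
so with probability at most `exp(-(ks)²/16)`, so by independence this event has probability at most
`π β²(k+5)²s² · exp(-(m-1)(ks)²/16) ≤ π β² s² (k+5)² e^{-k/32}` once `m ≥ 2`. Summing over `k`
and over the `m` sites gives the bound `π β² ∑ₖ (k+5)² e^{-k/32}`; for `m = 1` there is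
a single cell.
-/

open MeasureTheory ProbabilityTheory
open scoped ENNReal NNReal

noncomputable section

/-- The unit square `[0,1]² ⊆ ℝ²` (with the Euclidean metric). -/
def unitSquare : Set (EuclideanSpace ℝ (Fin 2)) := {x | ∀ i, x i ∈ Set.Icc (0 : ℝ) 1}

/-- The axis-parallel square with south-west corner `c` and side length `s`. -/
def axisSquare (c : EuclideanSpace ℝ (Fin 2)) (s : ℝ) : Set (EuclideanSpace ℝ (Fin 2)) :=
  {x | ∀ i, x i ∈ Set.Icc (c i) (c i + s)}

/-- The Voronoi cell of `p` with respect to the finite set of sites `P` inside the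
unit square, for the distance function `d` on the unit square. -/
def vorCellD (d : EuclideanSpace ℝ (Fin 2) → EuclideanSpace ℝ (Fin 2) → ℝ)
    (P : Finset (EuclideanSpace ℝ (Fin 2))) (p : EuclideanSpace ℝ (Fin 2)) :
    Set (EuclideanSpace ℝ (Fin 2)) :=
  {x ∈ unitSquare | ∀ q ∈ P, d x p ≤ d x q}

open Metric Real

lemma dist_le_mul_add_of_dist_le_mul_dist {E : Type*} [PseudoMetricSpace E] {x p q c : E}
    {β r : ℝ} (hβ : 0 ≤ β)
    (hxp : dist x p ≤ β * dist x q) (hxc : dist x c ≤ r) :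
    dist p c ≤ β * (dist q c + r) + r := by
  have hxq : dist x q ≤ dist q c + r := by linarith [dist_triangle x c q, dist_comm c q]
  have := mul_le_mul_of_nonneg_left hxq hβ
  linarith [dist_triangle_left p c x]

lemma Finset.exists_nat_forall_mul_le_and_exists_lt {J : Type*} {S : Finset J}
    (hS : S.Nonempty) {f : J → ℝ} (hf : ∀ j ∈ S, 0 ≤ f j) {s : ℝ} (hs : 0 < s) :
    ∃ k : ℕ, (∀ j ∈ S, k * s ≤ f j) ∧ ∃ j ∈ S, f j < (k + 1) * s := by
  obtain ⟨j₀, hj₀, hmin⟩ := S.exists_min_image f hS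
  refine ⟨⌊f j₀ / s⌋₊, fun j hj => ?_, j₀, hj₀, ?_⟩
  · calc (⌊f j₀ / s⌋₊ : ℝ) * s ≤ f j₀ :=
          (le_div_iff₀ hs).1 (Nat.floor_le (div_nonneg (hf j₀ hj₀) hs.le))
      _ ≤ f j := hmin j hj
  · exact (div_lt_iff₀ hs).1 (Nat.lt_floor_add_one _)

lemma dist_le_two_mul_of_forall_abs_sub_le {x y : EuclideanSpace ℝ (Fin 2)} {r : ℝ}
    (h : ∀ i, |x i - y i| ≤ r) : dist x y ≤ 2 * r := by
  have h0 := sq_abs (x 0 - y 0) ▸ pow_le_pow_left₀ (abs_nonneg _) (h 0) 2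
  have h1 := sq_abs (x 1 - y 1) ▸ pow_le_pow_left₀ (abs_nonneg _) (h 1) 2
  have hr : 0 ≤ r := (abs_nonneg _).trans (h 0)
  rw [EuclideanSpace.dist_eq, Fin.sum_univ_two, Real.sqrt_le_left (by positivity)]
  simp only [Real.dist_eq, sq_abs]
  nlinarith

lemma dist_le_of_mem_axisSquare {c x y : EuclideanSpace ℝ (Fin 2)} {s : ℝ}
    (hx : x ∈ axisSquare c s) (hy : y ∈ axisSquare c s) : dist x y ≤ 2 * s :=
  dist_le_two_mul_of_forall_abs_sub_le fun i => abs_sub_le_iff.2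
    ⟨by linarith [(hx i).2, (hy i).1], by linarith [(hx i).1, (hy i).2]⟩

lemma self_mem_axisSquare (c : EuclideanSpace ℝ (Fin 2)) {s : ℝ} (hs : 0 ≤ s) :
    c ∈ axisSquare c s :=
  fun _ => ⟨le_rfl, le_add_of_nonneg_right hs⟩

lemma unitSquare_eq_axisSquare : unitSquare = axisSquare 0 1 := by
  ext x
  simp [unitSquare, axisSquare]

lemma dist_le_two_of_mem_unitSquare {x y : EuclideanSpace ℝ (Fin 2)} (hx : x ∈ unitSquare)
    (hy : y ∈ unitSquare) : dist x y ≤ 2 := by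
  rw [unitSquare_eq_axisSquare] at hx hy
  simpa using dist_le_of_mem_axisSquare hx hy

lemma axisSquare_eq_preimage (c : EuclideanSpace ℝ (Fin 2)) (s : ℝ) :
    axisSquare c s =
      (MeasurableEquiv.toLp 2 (Fin 2 → ℝ)).symm ⁻¹'
        Set.univ.pi fun i => Set.Icc (c i) (c i + s) := by
  ext x
  simp only [axisSquare, Set.mem_ofPred_eq, Set.mem_preimage, Set.mem_univ_pi]
  rfl

lemma measurableSet_axisSquare (c : EuclideanSpace ℝ (Fin 2)) (s : ℝ) :
    MeasurableSet (axisSquare c s) := by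
  rw [axisSquare_eq_preimage]
  exact (MeasurableEquiv.measurable _) (.univ_pi fun _ => measurableSet_Icc)

lemma volume_axisSquare (c : EuclideanSpace ℝ (Fin 2)) {s : ℝ} (hs : 0 ≤ s) :
    volume (axisSquare c s) = ENNReal.ofReal (s ^ 2) := by
  rw [axisSquare_eq_preimage, (EuclideanSpace.volume_preserving_symm_measurableEquiv_toLp
    (Fin 2)).measure_preimage (MeasurableSet.univ_pi fun _ => measurableSet_Icc).nullMeasurableSet,
    volume_pi_pi]
  simp [Real.volume_Icc, ENNReal.ofReal_pow hs]

lemma measurableSet_unitSquare : MeasurableSet unitSquare :=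
  unitSquare_eq_axisSquare ▸ measurableSet_axisSquare 0 1

lemma volume_unitSquare : volume unitSquare = 1 := by
  simp [unitSquare_eq_axisSquare, volume_axisSquare]

lemma exists_mem_axisSquare_subset_unitSquare {c : EuclideanSpace ℝ (Fin 2)}
    (hc : c ∈ unitSquare) {a : ℝ} (ha : 0 ≤ a) (ha' : a ≤ 1 / 2) :
    ∃ c', c ∈ axisSquare c' a ∧ axisSquare c' a ⊆ unitSquare := by
  refine ⟨WithLp.toLp 2 fun i => if c i ≤ 1 / 2 then c i else c i - a, fun i => ?_,
    fun x hx i => ?_⟩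
  · have := hc i
    simp only [Set.mem_Icc] at *
    split_ifs <;> constructor <;> linarith
  · have := hc i
    have := hx i
    simp only [Set.mem_Icc] at *
    split_ifs at * <;> constructor <;> linarith

lemma volume_unitSquare_diff_ball_le {c : EuclideanSpace ℝ (Fin 2)} (hc : c ∈ unitSquare)
    {t : ℝ} (ht : 0 ≤ t) :
    volume (unitSquare \ ball c t) ≤ ENNReal.ofReal (Real.exp (-(t ^ 2 / 16))) := by
  obtain rfl | ht₀ := ht.eq_or_lt
  · simp [volume_unitSquare]
  obtain ht₂ | ht₂ := le_or_gt t 2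
  · obtain ⟨c', hc', hQ⟩ := exists_mem_axisSquare_subset_unitSquare hc (a := t / 4)
      (by positivity) (by linarith)
    have hQ_ball : axisSquare c' (t / 4) ⊆ ball c t := fun x hx =>
      mem_ball.2 (by linarith [dist_le_of_mem_axisSquare hx hc'])
    calc volume (unitSquare \ ball c t)
        ≤ volume (unitSquare \ axisSquare c' (t / 4)) :=
          measure_mono (Set.sdiff_subset_sdiff_right hQ_ball)
      _ = 1 - ENNReal.ofReal ((t / 4) ^ 2) := by
          rw [measure_sdiff hQ (measurableSet_axisSquare _ _).nullMeasurableSet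
            (by simp [volume_axisSquare _ (by positivity : 0 ≤ t / 4)]),
            volume_unitSquare, volume_axisSquare _ (by positivity)]
      _ = ENNReal.ofReal (1 - t ^ 2 / 16) := by
          rw [ENNReal.ofReal_sub _ (by positivity), ENNReal.ofReal_one]
          ring_nf
      _ ≤ ENNReal.ofReal (Real.exp (-(t ^ 2 / 16))) :=
          ENNReal.ofReal_le_ofReal (by linarith [Real.add_one_le_exp (-(t ^ 2 / 16))])
  · have : unitSquare \ ball c t = ∅ := Set.eq_empty_of_forall_notMem fun x hx =>
      hx.2 (mem_ball.2 (by linarith [dist_le_two_of_mem_unitSquare hx.1 hc]))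
    simp [this]

section Independence

lemma setOf_mem_and_forall_ne_mem_eq_iInter {ι Ω α : Type*} [DecidableEq ι] (p : ι → Ω → α)
    (i : ι) (A T : Set α) :
    {ω | p i ω ∈ A ∧ ∀ j ≠ i, p j ω ∈ T} = ⋂ j, p j ⁻¹' (if j = i then A else T) := by
  ext ω
  simp only [Set.mem_ofPred_eq, Set.mem_iInter, Set.mem_preimage]
  refine ⟨fun ⟨hi, hj⟩ j => ?_,
    fun h => ⟨by simpa using h i, fun j hj => by simpa [hj] using h j⟩⟩
  split_ifs with h
  exacts [h ▸ hi, hj j h]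

variable {ι Ω α : Type*} [MeasurableSpace Ω] [MeasurableSpace α] {μ : Measure Ω}

lemma measurableSet_mem_and_forall_ne_mem [Countable ι] {p : ι → Ω → α}
    (hp : ∀ j, Measurable (p j)) (i : ι) {A T : Set α} (hA : MeasurableSet A)
    (hT : MeasurableSet T) : MeasurableSet {ω | p i ω ∈ A ∧ ∀ j ≠ i, p j ω ∈ T} := by
  classical
  rw [setOf_mem_and_forall_ne_mem_eq_iInter]
  exact .iInter fun j => hp j (by split_ifs; exacts [hA, hT])

lemma ProbabilityTheory.iIndepFun.measure_mem_and_forall_ne_mem [Fintype ι] {ν : Measure α}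
    {p : ι → Ω → α} (hind : iIndepFun p μ) (hp : ∀ j, Measurable (p j))
    (hlaw : ∀ j, μ.map (p j) = ν) (i : ι)
    {A T : Set α} (hA : MeasurableSet A) (hT : MeasurableSet T) :
    μ {ω | p i ω ∈ A ∧ ∀ j ≠ i, p j ω ∈ T} = ν A * ν T ^ (Fintype.card ι - 1) := by
  classical
  have hlaw' (j : ι) {X : Set α} (hX : MeasurableSet X) : μ (p j ⁻¹' X) = ν X := by
    rw [← Measure.map_apply (hp j) hX, hlaw j]
  rw [setOf_mem_and_forall_ne_mem_eq_iInter,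
    hind.meas_iInter fun j => ⟨_, by split_ifs; exacts [hA, hT], rfl⟩,
    Fintype.prod_eq_mul_prod_compl i, if_pos rfl, hlaw' i hA,
    Finset.prod_congr rfl fun j hj => by
      rw [if_neg (by simpa using hj), hlaw' j hT],
    Finset.prod_const, Finset.card_compl, Finset.card_singleton]

lemma lintegral_card_filter_le [Fintype ι] (P : ι → Ω → Prop) [∀ ω, DecidablePred (P · ω)]
    {E : ι → Set Ω} (hE : ∀ i, MeasurableSet (E i)) (hPE : ∀ᵐ ω ∂μ, ∀ i, P i ω → ω ∈ E i) :
    ∫⁻ ω, ((Finset.univ.filter (P · ω)).card : ℝ≥0∞) ∂μ ≤ ∑ i, μ (E i) := by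
  calc ∫⁻ ω, ((Finset.univ.filter (P · ω)).card : ℝ≥0∞) ∂μ
      ≤ ∫⁻ ω, ∑ i, (E i).indicator 1 ω ∂μ := by
        refine lintegral_mono_ae (hPE.mono fun ω hω => ?_)
        rw [Finset.card_filter, Nat.cast_sum]
        refine Finset.sum_le_sum fun i _ => ?_
        split_ifs with hi
        · simp [Set.indicator_of_mem (hω i hi)]
        · simp
    _ = ∑ i, μ (E i) := by
        rw [lintegral_finsetSum _ fun i _ => measurable_one.indicator (hE i)]
        simp only [lintegral_indicator_one (hE _)]

end Independence

lemma measure_mem_closedBall_and_forall_ne_mem_compl_ball_le {ι Ω : Type*} [Fintype ι]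
    [MeasurableSpace Ω] {μ : Measure Ω} {p : ι → Ω → EuclideanSpace ℝ (Fin 2)}
    (hind : iIndepFun p μ) (hp : ∀ j, Measurable (p j))
    (hlaw : ∀ j, μ.map (p j) = volume.restrict unitSquare) (i : ι)
    {c : EuclideanSpace ℝ (Fin 2)} (hc : c ∈ unitSquare) (r : ℝ) {t : ℝ} (ht : 0 ≤ t) :
    μ {ω | p i ω ∈ closedBall c r ∧ ∀ j ≠ i, p j ω ∈ (ball c t)ᶜ} ≤
      ENNReal.ofReal r ^ 2 * ENNReal.ofReal π *
        ENNReal.ofReal (Real.exp (-(t ^ 2 / 16))) ^ (Fintype.card ι - 1) := by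
  rw [hind.measure_mem_and_forall_ne_mem hp hlaw i measurableSet_closedBall
    measurableSet_ball.compl]
  gcongr
  · exact (Measure.restrict_apply_le _ _).trans_eq (EuclideanSpace.volume_closedBall_fin_two c r)
  · rw [Measure.restrict_apply measurableSet_ball.compl, Set.inter_comm, ← Set.sdiff_eq]
    exact volume_unitSquare_diff_ball_le hc ht

lemma exp_neg_sq_mul_div_pow_le {m : ℕ} (hm : 2 ≤ m) {s : ℝ} (hms : m * s ^ 2 = 1) (k : ℕ) :
    Real.exp (-((k * s) ^ 2 / 16)) ^ (m - 1) ≤ Real.exp (-(1 / 32) * k) := by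
  rw [← Real.exp_nat_mul, Real.exp_le_exp, Nat.cast_sub (by omega : 1 ≤ m)]
  have hm' : (2 : ℝ) ≤ m := by exact_mod_cast hm
  have hs : 1 / 2 ≤ ((m : ℝ) - 1) * s ^ 2 := by nlinarith
  have hk : (k : ℝ) ≤ (k : ℝ) ^ 2 := by exact_mod_cast Nat.le_self_pow two_ne_zero k
  nlinarith [mul_le_mul_of_nonneg_left hs (sq_nonneg (k : ℝ))]

def ringSeries : ℝ := ∑' k : ℕ, ((k : ℝ) + 5) ^ 2 * Real.exp (-(1 / 32) * k)

lemma summable_ringSeries :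
    Summable fun k : ℕ => ((k : ℝ) + 5) ^ 2 * Real.exp (-(1 / 32) * k) := by
  have h (n : ℕ) := Real.summable_pow_mul_exp_neg_nat_mul n (r := 1 / 32) (by norm_num)
  convert ((h 2).add ((h 1).mul_left 10)).add ((h 0).mul_left 25) using 2 with k
  ring

lemma twentyFive_le_ringSeries : 25 ≤ ringSeries := by
  calc (25 : ℝ) = (((0 : ℕ) : ℝ) + 5) ^ 2 * Real.exp (-(1 / 32) * (0 : ℕ)) := by norm_num
    _ ≤ ringSeries := summable_ringSeries.le_tsum 0 fun k _ => by positivity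

def ringEvent {ι Ω : Type*} (p : ι → Ω → EuclideanSpace ℝ (Fin 2)) (i : ι)
    (c : EuclideanSpace ℝ (Fin 2)) (β s : ℝ) (k : ℕ) : Set Ω :=
  {ω | p i ω ∈ closedBall c (β * (k + 5) * s) ∧ ∀ j ≠ i, p j ω ∈ (ball c (k * s))ᶜ}

open Classical in
lemma exists_nat_of_vorCellD_inter_axisSquare_nonempty {ι : Type*} [Fintype ι]
    {d : EuclideanSpace ℝ (Fin 2) → EuclideanSpace ℝ (Fin 2) → ℝ} {β : ℝ} (hβ : 1 ≤ β)
    (hd : ∀ x ∈ unitSquare, ∀ y ∈ unitSquare, dist x y ≤ d x y ∧ d x y ≤ β * dist x y)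
    {q : ι → EuclideanSpace ℝ (Fin 2)} (hq : ∀ j, q j ∈ unitSquare) {i : ι}
    (hi : ∃ j, j ≠ i) {c : EuclideanSpace ℝ (Fin 2)} {s : ℝ} (hs : 0 < s)
    (hmeet : (vorCellD d (Finset.univ.image q) (q i) ∩ axisSquare c s).Nonempty) :
    ∃ k : ℕ, q i ∈ closedBall c (β * (k + 5) * s) ∧ ∀ j ≠ i, q j ∈ (ball c (k * s))ᶜ := by
  obtain ⟨x, ⟨hxU, hxvor⟩, hxsq⟩ := hmeet
  obtain ⟨j₀, hj₀⟩ := hi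
  obtain ⟨k, hfar, j, hj, hnear⟩ := Finset.exists_nat_forall_mul_le_and_exists_lt
    ⟨j₀, Finset.mem_erase.2 ⟨hj₀, Finset.mem_univ _⟩⟩ (fun j _ => dist_nonneg) hs
    (S := Finset.univ.erase i) (f := fun j => dist (q j) c)
  refine ⟨k, mem_closedBall.2 ?_, fun j' hj' => ?_⟩
  · have hxq : dist x (q i) ≤ β * dist x (q j) :=
      calc dist x (q i) ≤ d x (q i) := (hd x hxU _ (hq i)).1
        _ ≤ d x (q j) := hxvor _ (Finset.mem_image_of_mem q (Finset.mem_univ j))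
        _ ≤ β * dist x (q j) := (hd x hxU _ (hq j)).2
    have := dist_le_mul_add_of_dist_le_mul_dist (by linarith) hxq
      (dist_le_of_mem_axisSquare hxsq (self_mem_axisSquare c hs.le))
    nlinarith
  · exact not_lt.2 (hfar j' (Finset.mem_erase.2 ⟨hj', Finset.mem_univ _⟩))

lemma measure_iUnion_ringEvent_le {Ω : Type*} [MeasurableSpace Ω] {μ : Measure Ω} {m : ℕ}
    (hm : 2 ≤ m)
    {p : Fin m → Ω → EuclideanSpace ℝ (Fin 2)} (hind : iIndepFun p μ)
    (hp : ∀ j, Measurable (p j)) (hlaw : ∀ j, μ.map (p j) = volume.restrict unitSquare)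
    (i : Fin m) {c : EuclideanSpace ℝ (Fin 2)} (hc : c ∈ unitSquare) {β s : ℝ} (hβ : 0 ≤ β)
    (hs : 0 ≤ s) (hms : m * s ^ 2 = 1) :
    μ (⋃ k, ringEvent p i c β s k) ≤ ENNReal.ofReal (π * β ^ 2 * s ^ 2 * ringSeries) := by
  calc _ ≤ ∑' k, μ (ringEvent p i c β s k) := measure_iUnion_le _
    _ ≤ ∑' k : ℕ, ENNReal.ofReal (π * β ^ 2 * s ^ 2 *
          (((k : ℝ) + 5) ^ 2 * Real.exp (-(1 / 32) * k))) := by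
        refine ENNReal.tsum_le_tsum fun k => (measure_mem_closedBall_and_forall_ne_mem_compl_ball_le
          hind hp hlaw i hc _ (by positivity)).trans ?_
        rw [Fintype.card_fin, ← ENNReal.ofReal_pow (by positivity),
          ← ENNReal.ofReal_pow (by positivity), ← ENNReal.ofReal_mul (by positivity),
          ← ENNReal.ofReal_mul (by positivity)]
        refine ENNReal.ofReal_le_ofReal ?_
        calc (β * (k + 5) * s) ^ 2 * π * Real.exp (-((k * s) ^ 2 / 16)) ^ (m - 1)
            ≤ (β * (k + 5) * s) ^ 2 * π * Real.exp (-(1 / 32) * k) := by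
              gcongr
              exact exp_neg_sq_mul_div_pow_le hm hms k
          _ = _ := by ring
    _ = ENNReal.ofReal (π * β ^ 2 * s ^ 2 * ringSeries) := by
        rw [← ENNReal.ofReal_tsum_of_nonneg (fun k => by positivity)
          (summable_ringSeries.mul_left _), tsum_mul_left, ringSeries]

open Classical in
lemma lintegral_card_vorCellD_inter_axisSquare_nonempty_le {β : ℝ} (hβ : 1 ≤ β)
    {d : EuclideanSpace ℝ (Fin 2) → EuclideanSpace ℝ (Fin 2) → ℝ}
    (hd : ∀ x ∈ unitSquare, ∀ y ∈ unitSquare, dist x y ≤ d x y ∧ d x y ≤ β * dist x y)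
    {m : ℕ} (hm : 2 ≤ m) {Ω : Type*} [MeasurableSpace Ω] {μ : Measure Ω}
    {p : Fin m → Ω → EuclideanSpace ℝ (Fin 2)} (hp : ∀ i, Measurable (p i))
    (hind : iIndepFun p μ) (hlaw : ∀ i, μ.map (p i) = volume.restrict unitSquare)
    {c : EuclideanSpace ℝ (Fin 2)} (hsq : axisSquare c (1 / Real.sqrt m) ⊆ unitSquare) :
    ∫⁻ ω, ((Finset.univ.filter (fun i : Fin m =>
        (vorCellD d (Finset.image (fun j => p j ω) Finset.univ) (p i ω) ∩
          axisSquare c (1 / Real.sqrt m)).Nonempty)).card : ℝ≥0∞) ∂μ ≤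
      ENNReal.ofReal (π * β ^ 2 * ringSeries) := by
  set s := 1 / Real.sqrt m
  have hm₀ : (0 : ℝ) < m := by positivity
  have hs : 0 < s := by positivity
  have hms : m * s ^ 2 = 1 := by
    rw [div_pow, Real.sq_sqrt hm₀.le]
    field_simp
  have hc : c ∈ unitSquare := hsq (self_mem_axisSquare c hs.le)
  have hmem : ∀ᵐ ω ∂μ, ∀ j, p j ω ∈ unitSquare := ae_all_iff.2 fun j =>
    ae_of_ae_map (hp j).aemeasurable ((hlaw j).symm ▸ ae_restrict_mem measurableSet_unitSquare)
  calc _ ≤ ∑ i, μ (⋃ k, ringEvent p i c β s k) :=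
        lintegral_card_filter_le (fun i ω => (vorCellD d (Finset.image (fun j => p j ω)
            Finset.univ) (p i ω) ∩ axisSquare c s).Nonempty)
          (fun i => .iUnion fun k => measurableSet_mem_and_forall_ne_mem hp i
            measurableSet_closedBall measurableSet_ball.compl)
          (hmem.mono fun ω hω i hi => Set.mem_iUnion.2
            (exists_nat_of_vorCellD_inter_axisSquare_nonempty hβ hd hω
              (Fintype.exists_ne_of_one_lt_card (by simp; omega) i) hs hi))
    _ ≤ ∑ _i : Fin m, ENNReal.ofReal (π * β ^ 2 * s ^ 2 * ringSeries) :=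
        Finset.sum_le_sum fun i _ =>
          measure_iUnion_ringEvent_le hm hind hp hlaw i hc
            (by positivity) hs.le hms
    _ = ENNReal.ofReal (π * β ^ 2 * ringSeries) := by
        rw [Finset.sum_const, Finset.card_univ, Fintype.card_fin, nsmul_eq_mul,
          ← ENNReal.ofReal_natCast, ← ENNReal.ofReal_mul hm₀.le]
        congr 1
        linear_combination π * β ^ 2 * ringSeries * hms

open Classical in
/-- There is a universal constant `C > 0` such that the following holds.  Let `β ≥ 1`
and let `d` be any metric on the unit square that is within a factor `β` of the
Euclidean distance.  For `m ≥ 1` i.i.d. uniform points on the unit square, the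
expected number of sites whose Voronoi cell in the metric `d` meets a fixed
axis-parallel sub-square of side length `1/√m` is at most `C·β⁵`. -/
theorem expected_cells_meeting_square_terrain :
    ∃ C : ℝ, 0 < C ∧
      ∀ (β : ℝ), 1 ≤ β →
      ∀ (d : EuclideanSpace ℝ (Fin 2) → EuclideanSpace ℝ (Fin 2) → ℝ),
        (∀ x ∈ unitSquare, ∀ y ∈ unitSquare, d x y = d y x) →
        (∀ x ∈ unitSquare, ∀ y ∈ unitSquare, ∀ z ∈ unitSquare, d x z ≤ d x y + d y z) →
        (∀ x ∈ unitSquare, ∀ y ∈ unitSquare, dist x y ≤ d x y ∧ d x y ≤ β * dist x y) →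
      ∀ (m : ℕ), 1 ≤ m →
      ∀ (Ω : Type) (_ : MeasurableSpace Ω) (μ : Measure Ω), IsProbabilityMeasure μ →
      ∀ (p : Fin m → Ω → EuclideanSpace ℝ (Fin 2)),
        (∀ i, Measurable (p i)) →
        iIndepFun p μ →
        (∀ i, Measure.map (p i) μ = volume.restrict unitSquare) →
      ∀ c : EuclideanSpace ℝ (Fin 2),
        axisSquare c (1 / Real.sqrt m) ⊆ unitSquare →
        ∫⁻ ω, ((Finset.univ.filter (fun i : Fin m =>
            (vorCellD d (Finset.image (fun j => p j ω) Finset.univ) (p i ω) ∩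
              axisSquare c (1 / Real.sqrt m)).Nonempty)).card : ℝ≥0∞) ∂μ
          ≤ ENNReal.ofReal (C * β ^ 5) := by
  have hC : 1 ≤ π * ringSeries := by
    nlinarith [pi_gt_three, twentyFive_le_ringSeries]
  refine ⟨π * ringSeries, by linarith,
    fun β hβ d _ _ hd m hm Ω _ μ _ p hp hind hlaw c hsq => ?_⟩
  have hβ₅ : 1 ≤ β ^ 5 := one_le_pow₀ hβ
  obtain rfl | hm₂ := hm.eq_or_lt
  · calc _ ≤ ∫⁻ _, (1 : ℝ≥0∞) ∂μ := lintegral_mono fun _ =>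
          Nat.cast_le_one.2 (Finset.card_le_one_of_subsingleton _)
      _ ≤ ENNReal.ofReal (π * ringSeries * β ^ 5) := by
          simpa using ENNReal.one_le_ofReal.2 (by nlinarith)
  · refine (lintegral_card_vorCellD_inter_axisSquare_nonempty_le hβ hd hm₂ hp hind hlaw hsq).trans
      (ENNReal.ofReal_le_ofReal ?_)
    have : β ^ 2 ≤ β ^ 5 := pow_le_pow_right₀ hβ (by norm_num)
    nlinarith
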